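/- arXiv:2602.01130 — 4 statements merged into one kernel-verified Lean document; each statement's English description precedes it below -/
import Mathlib

section
/- With the notation of the Drinfeld double setting above (perfect bialgebra pairing A ⊗ B → K, dual bases {a_k}, {b_k}, canonical tensor R = Σ_k a_k ⊗ b_k), the canonical tensor satisfies (Δ ⊗ Id)(R) = R₁₃R₂₃ in D ⊗ D ⊗ D, where R₁₃ and R₂₃ denote R placed in the indicated tensor factors with 1 in the remaining factor. -/
/-!
STATEMENT 1: With a perfect bialgebra pairing and dual bases {a_k}, {b_k}, the canonical tensor R = Σ a_k ⊗ b_k satisfies (Δ ⊗ Id)(R) = R₁₃R₂₃ in D ⊗ D ⊗ D.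
-/

open TensorProduct

/-- The pairing extended to the tensor product: `A ⊗ B → K`. -/
noncomputable def pairT {K A B : Type*} [CommRing K] [AddCommGroup A] [Module K A]
    [AddCommGroup B] [Module K B] (p : A →ₗ[K] Module.Dual K B) :
    A ⊗[K] B →ₗ[K] K :=
  TensorProduct.lift p

/-- `pair2 p (a₁ ⊗ a₂) (b₁ ⊗ b₂) = ⟨a₁,b₁⟩⟨a₂,b₂⟩`. -/
noncomputable def pair2 {K A B : Type*} [CommRing K] [AddCommGroup A] [Module K A]
    [AddCommGroup B] [Module K B] (p : A →ₗ[K] Module.Dual K B) :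
    A ⊗[K] A →ₗ[K] Module.Dual K (B ⊗[K] B) :=
  (TensorProduct.dualDistrib K B B) ∘ₗ (TensorProduct.map p p)

/-- `pair2' p (b₁ ⊗ b₂) (a₁ ⊗ a₂) = ⟨a₁,b₁⟩⟨a₂,b₂⟩`. -/
noncomputable def pair2' {K A B : Type*} [CommRing K] [AddCommGroup A] [Module K A]
    [AddCommGroup B] [Module K B] (p : A →ₗ[K] Module.Dual K B) :
    B ⊗[K] B →ₗ[K] Module.Dual K (A ⊗[K] A) :=
  (TensorProduct.dualDistrib K A A) ∘ₗ (TensorProduct.map p.flip p.flip)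

/-- `mulIm f g (a ⊗ b) = f a * g b` in `D`. -/
noncomputable def mulIm {K A B D : Type*} [CommRing K] [AddCommGroup A] [Module K A]
    [AddCommGroup B] [Module K B] [Ring D] [Algebra K D]
    (f : A →ₗ[K] D) (g : B →ₗ[K] D) : A ⊗[K] B →ₗ[K] D :=
  TensorProduct.lift ((LinearMap.mul K D).compl₁₂ f g)

/-- `mulImRev f g (a ⊗ b) = g b * f a` in `D`. -/
noncomputable def mulImRev {K A B D : Type*} [CommRing K] [AddCommGroup A] [Module K A]
    [AddCommGroup B] [Module K B] [Ring D] [Algebra K D]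
    (f : A →ₗ[K] D) (g : B →ₗ[K] D) : A ⊗[K] B →ₗ[K] D :=
  TensorProduct.lift (((LinearMap.mul K D).compl₁₂ g f).flip)

/-- Left-hand side of the Drinfeld double cross relation, as a linear map on
`(A ⊗ B) ⊗ (A ⊗ B)`:  `(a₁ ⊗ b₁) ⊗ (a₂ ⊗ b₂) ↦ (ιA a₁ * ιB b₁) * algebraMap ⟨a₂,b₂⟩`,
i.e. `a₁b₁⟨a₂,b₂⟩`. -/
noncomputable def crossLHS {K A B D : Type*} [CommRing K] [AddCommGroup A] [Module K A]
    [AddCommGroup B] [Module K B] [Ring D] [Algebra K D]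
    (p : A →ₗ[K] Module.Dual K B) (f : A →ₗ[K] D) (g : B →ₗ[K] D) :
    (A ⊗[K] B) ⊗[K] (A ⊗[K] B) →ₗ[K] D :=
  (LinearMap.mul' K D) ∘ₗ
    (TensorProduct.map (mulIm f g) ((Algebra.linearMap K D) ∘ₗ pairT p))

/-- Right-hand side of the Drinfeld double cross relation:
`(a₁ ⊗ b₁) ⊗ (a₂ ⊗ b₂) ↦ ⟨a₁,b₁⟩ b₂a₂`. -/
noncomputable def crossRHS {K A B D : Type*} [CommRing K] [AddCommGroup A] [Module K A]
    [AddCommGroup B] [Module K B] [Ring D] [Algebra K D]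
    (p : A →ₗ[K] Module.Dual K B) (f : A →ₗ[K] D) (g : B →ₗ[K] D) :
    (A ⊗[K] B) ⊗[K] (A ⊗[K] B) →ₗ[K] D :=
  (LinearMap.mul' K D) ∘ₗ
    (TensorProduct.map ((Algebra.linearMap K D) ∘ₗ pairT p) (mulImRev f g))

/-!
Since `{b_i ⊗ b_j}` is dual to `{a_i ⊗ a_j}`, the pairing axiom `⟨a, b b'⟩ = ⟨Δ a, b ⊗ b'⟩`
gives `Δ a_k = Σ ⟨a_k, b_i b_j⟩ a_i ⊗ a_j`. Tensoring with `b_k` and summing over `k`, the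
dual-basis expansion `Σ_k ⟨a_k, b⟩ b_k = b` collapses `(Δ ⊗ id) R` to
`Σ a_i ⊗ a_j ⊗ b_i b_j`, which is `R₁₃ R₂₃` multiplied out.
-/

section DualBases

variable {K A B : Type*} [CommRing K] [AddCommGroup A] [Module K A] [AddCommGroup B]
  [Module K B] (p : A →ₗ[K] Module.Dual K B) {ι : Type*} [Fintype ι] (aB : ι → A) (bB : ι → B)

theorem pair2_tmul_tmul (a a' : A) (b b' : B) :
    pair2 p (a ⊗ₜ[K] a') (b ⊗ₜ[K] b') = p a b * p a' b' := by
  simp [pair2, TensorProduct.dualDistrib_apply]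

theorem sum_pair2_smul_tmul (hdual1 : ∀ a : A, ∑ k, p a (bB k) • aB k = a) (x : A ⊗[K] A) :
    ∑ ij : ι × ι, pair2 p x (bB ij.1 ⊗ₜ[K] bB ij.2) • (aB ij.1 ⊗ₜ[K] aB ij.2) = x := by
  induction x using TensorProduct.induction_on with
  | zero => simp
  | tmul a a' =>
    conv_rhs => rw [← hdual1 a, ← hdual1 a', TensorProduct.sum_tmul]
    simp only [pair2_tmul_tmul, Fintype.sum_prod_type, TensorProduct.tmul_sum,
      TensorProduct.smul_tmul_smul]
  | add x y hx hy =>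
    simp only [map_add, LinearMap.add_apply, add_smul, Finset.sum_add_distrib, hx, hy]

theorem sum_sum_pair_smul_tmul {M N : Type*} [AddCommGroup M] [Module K M] [AddCommGroup N]
    [Module K N] (hdual2 : ∀ b : B, ∑ k, p (aB k) b • bB k = b) (g : B →ₗ[K] N)
    {κ : Type*} [Fintype κ] (c : κ → B) (m : κ → M) :
    ∑ k, (∑ j, p (aB k) (c j) • m j) ⊗ₜ[K] g (bB k) = ∑ j, m j ⊗ₜ[K] g (c j) := by
  simp_rw [TensorProduct.sum_tmul, TensorProduct.smul_tmul]
  rw [Finset.sum_comm]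
  refine Finset.sum_congr rfl fun j _ => ?_
  rw [← TensorProduct.tmul_sum]
  conv_rhs => rw [← hdual2 (c j), map_sum]
  simp only [map_smul]

theorem comul_eq_sum_pair_mul_smul_tmul [Coalgebra K A] [Mul B]
    (hpair1 : ∀ (a : A) (b b' : B),
      p a (b * b') = pair2 p (Coalgebra.comul (R := K) a) (b ⊗ₜ[K] b'))
    (hdual1 : ∀ a : A, ∑ k, p a (bB k) • aB k = a) (a : A) :
    Coalgebra.comul (R := K) a =
      ∑ ij : ι × ι, p a (bB ij.1 * bB ij.2) • (aB ij.1 ⊗ₜ[K] aB ij.2) := by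
  simp only [hpair1]
  exact (sum_pair2_smul_tmul p aB bB hdual1 _).symm

end DualBases

theorem canonical_tensor_delta_R13_R23_general
    {K A B D : Type*} [Field K] [Ring A] [Ring B] [Ring D]
    [Bialgebra K A] [Bialgebra K B] [Algebra K D]
    (ιA : A →ₐ[K] D) (ιB : B →ₐ[K] D)
    (p : A →ₗ[K] Module.Dual K B)
    -- bialgebra pairing axiom: ⟨a, b'b''⟩ = ⟨a₁,b'⟩⟨a₂,b''⟩
    (hpair1 : ∀ (a : A) (b b' : B),
      p a (b * b') = pair2 p (Coalgebra.comul (R := K) a) (b ⊗ₜ[K] b'))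
    -- the coproduct of the Drinfeld double D
    (ΔD : D →ₗ[K] D ⊗[K] D)
    (hΔA : ∀ a : A, ΔD (ιA a) =
      TensorProduct.map ιA.toLinearMap ιA.toLinearMap (Coalgebra.comul (R := K) a))
    -- dual bases with respect to the (perfect) pairing
    {ι : Type*} [Fintype ι] (aB : ι → A) (bB : ι → B)
    (hdual1 : ∀ a : A, ∑ k, p a (bB k) • aB k = a)
    (hdual2 : ∀ b : B, ∑ k, p (aB k) b • bB k = b) :
    TensorProduct.map ΔD (LinearMap.id (R := K) (M := D))
        (∑ k, ιA (aB k) ⊗ₜ[K] ιB (bB k))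
      = (∑ k, (ιA (aB k) ⊗ₜ[K] (1 : D)) ⊗ₜ[K] ιB (bB k))
        * (∑ k, ((1 : D) ⊗ₜ[K] ιA (aB k)) ⊗ₜ[K] ιB (bB k)) := by
  have hΔR : ∀ k, ΔD (ιA (aB k)) = ∑ ij : ι × ι,
      p (aB k) (bB ij.1 * bB ij.2) • (ιA (aB ij.1) ⊗ₜ[K] ιA (aB ij.2)) := fun k => by
    simp [hΔA, comul_eq_sum_pair_mul_smul_tmul p aB bB hpair1 hdual1]
  calc TensorProduct.map ΔD LinearMap.id (∑ k, ιA (aB k) ⊗ₜ[K] ιB (bB k))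
      = ∑ k, ΔD (ιA (aB k)) ⊗ₜ[K] ιB.toLinearMap (bB k) := by simp
    _ = ∑ ij : ι × ι,
          (ιA (aB ij.1) ⊗ₜ[K] ιA (aB ij.2)) ⊗ₜ[K] ιB.toLinearMap (bB ij.1 * bB ij.2) := by
      simp only [hΔR]
      exact sum_sum_pair_smul_tmul p aB bB hdual2 _ _ _
    _ = _ := by
      rw [Finset.sum_mul_sum, Fintype.sum_prod_type]
      simp [Algebra.TensorProduct.tmul_mul_tmul]

theorem canonical_tensor_delta_R13_R23
    {K A B D : Type*} [Field K] [Ring A] [Ring B] [Ring D]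
    [Bialgebra K A] [Bialgebra K B] [Algebra K D]
    (ιA : A →ₐ[K] D) (ιB : B →ₐ[K] D)
    (p : A →ₗ[K] Module.Dual K B)
    -- bialgebra pairing axiom: ⟨a, b'b''⟩ = ⟨a₁,b'⟩⟨a₂,b''⟩
    (hpair1 : ∀ (a : A) (b b' : B),
      p a (b * b') = pair2 p (Coalgebra.comul (R := K) a) (b ⊗ₜ[K] b'))
    -- bialgebra pairing axiom: ⟨a'a'', b⟩ = ⟨a',b₂⟩⟨a'',b₁⟩
    (hpair2 : ∀ (a a' : A) (b : B),
      p (a * a') b = pair2' p (Coalgebra.comul (R := K) b) (a' ⊗ₜ[K] a))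
    -- the coproduct of the Drinfeld double D
    (ΔD : D →ₗ[K] D ⊗[K] D)
    (hΔmul : ∀ x y' : D, ΔD (x * y') = ΔD x * ΔD y')
    (hΔA : ∀ a : A, ΔD (ιA a) =
      TensorProduct.map ιA.toLinearMap ιA.toLinearMap (Coalgebra.comul (R := K) a))
    (hΔB : ∀ b : B, ΔD (ιB b) =
      TensorProduct.map ιB.toLinearMap ιB.toLinearMap (Coalgebra.comul (R := K) b))
    -- the Drinfeld double cross relation a₁b₁⟨a₂,b₂⟩ = ⟨a₁,b₁⟩b₂a₂
    (hcross : ∀ (a : A) (b : B),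
      crossLHS p ιA.toLinearMap ιB.toLinearMap
          (TensorProduct.tensorTensorTensorComm K A A B B
            ((Coalgebra.comul (R := K) a) ⊗ₜ[K] (Coalgebra.comul (R := K) b)))
        = crossRHS p ιA.toLinearMap ιB.toLinearMap
          (TensorProduct.tensorTensorTensorComm K A A B B
            ((Coalgebra.comul (R := K) a) ⊗ₜ[K] (Coalgebra.comul (R := K) b))))
    -- D = A ⊗ B as a vector space: D is spanned by the products a·b
    (hspan : Submodule.span K {d : D | ∃ (a : A) (b : B), d = ιA a * ιB b} = ⊤)
    -- dual bases with respect to the (perfect) pairing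
    {ι : Type*} [Fintype ι] (aB : ι → A) (bB : ι → B)
    (hdual1 : ∀ a : A, ∑ k, p a (bB k) • aB k = a)
    (hdual2 : ∀ b : B, ∑ k, p (aB k) b • bB k = b) :
    TensorProduct.map ΔD (LinearMap.id (R := K) (M := D))
        (∑ k, ιA (aB k) ⊗ₜ[K] ιB (bB k))
      = (∑ k, (ιA (aB k) ⊗ₜ[K] (1 : D)) ⊗ₜ[K] ιB (bB k))
        * (∑ k, ((1 : D) ⊗ₜ[K] ιA (aB k)) ⊗ₜ[K] ιB (bB k)) :=
  canonical_tensor_delta_R13_R23_general ιA ιB p hpair1 ΔD hΔA aB bB hdual1 hdual2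
end

section
/- With the notation of the Drinfeld double setting above (perfect bialgebra pairing A ⊗ B → K, dual bases {a_k}, {b_k}, canonical tensor R = Σ_k a_k ⊗ b_k), the canonical tensor satisfies (Id ⊗ Δ)(R) = R₁₃R₁₂ in D ⊗ D ⊗ D. -/
/-!
Since `⟨a'a, b⟩` is the pairing of `Δb` with `a ⊗ a'`, expanding `Δ(b_k)` in the basis
`b_j ⊗ b_j'` of `B ⊗ B` gives
`Σ_k a_k ⊗ Δ(b_k) = Σ_{j,j'} (Σ_k ⟨a_j' a_j, b_k⟩ a_k) ⊗ b_j ⊗ b_j' = Σ_{j,j'} a_j' a_j ⊗ b_j ⊗ b_j'`.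
Pushed into `D ⊗ D ⊗ D` along `ιA ⊗ ιB ⊗ ιB`, the left side is `(Id ⊗ Δ)(R)` and the right side
is the expanded product `R₁₃R₁₂`.
-/

open TensorProduct

section DualBases

variable {K A B : Type*} [CommRing K] [AddCommGroup A] [Module K A] [AddCommGroup B] [Module K B]
  (p : A →ₗ[K] Module.Dual K B) {ι : Type*} [Fintype ι] (aB : ι → A) (bB : ι → B)

theorem pair2'_tmul_tmul (b b' : B) (a a' : A) :
    pair2' p (b ⊗ₜ[K] b') (a ⊗ₜ[K] a') = p a b * p a' b' := by
  simp [pair2', dualDistrib_apply]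

theorem sum_sum_pair2'_smul_tmul (hdual2 : ∀ b : B, ∑ k, p (aB k) b • bB k = b)
    (t : B ⊗[K] B) :
    ∑ j, ∑ j', pair2' p t (aB j ⊗ₜ[K] aB j') • (bB j ⊗ₜ[K] bB j') = t := by
  induction t using TensorProduct.induction_on with
  | zero => simp
  | tmul b b' =>
    simp_rw [pair2'_tmul_tmul, ← smul_tmul_smul, ← tmul_sum, ← sum_tmul, hdual2]
  | add t t' ht ht' =>
    simp only [map_add, LinearMap.add_apply, add_smul, Finset.sum_add_distrib, ht, ht']

variable [Mul A] [Coalgebra K B]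

theorem comul_eq_sum_sum_of_dualBases
    (hpair2 : ∀ (a a' : A) (b : B),
      p (a * a') b = pair2' p (Coalgebra.comul (R := K) b) (a' ⊗ₜ[K] a))
    (hdual2 : ∀ b : B, ∑ k, p (aB k) b • bB k = b) (b : B) :
    Coalgebra.comul (R := K) b = ∑ j, ∑ j', p (aB j' * aB j) b • (bB j ⊗ₜ[K] bB j') := by
  simp_rw [hpair2]
  exact (sum_sum_pair2'_smul_tmul p aB bB hdual2 _).symm

theorem sum_tmul_comul_eq_sum_sum_mul_tmul
    (hpair2 : ∀ (a a' : A) (b : B),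
      p (a * a') b = pair2' p (Coalgebra.comul (R := K) b) (a' ⊗ₜ[K] a))
    (hdual1 : ∀ a : A, ∑ k, p a (bB k) • aB k = a)
    (hdual2 : ∀ b : B, ∑ k, p (aB k) b • bB k = b) :
    ∑ k, aB k ⊗ₜ[K] Coalgebra.comul (R := K) (bB k)
      = ∑ j, ∑ j', (aB j' * aB j) ⊗ₜ[K] (bB j ⊗ₜ[K] bB j') := by
  calc ∑ k, aB k ⊗ₜ[K] Coalgebra.comul (R := K) (bB k)
      = ∑ j, ∑ j', (∑ k, p (aB j' * aB j) (bB k) • aB k) ⊗ₜ[K] (bB j ⊗ₜ[K] bB j') := by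
        simp_rw [comul_eq_sum_sum_of_dualBases p aB bB hpair2 hdual2, tmul_sum, sum_tmul,
          tmul_smul, smul_tmul']
        rw [Finset.sum_comm]
        exact Finset.sum_congr rfl fun _ _ => Finset.sum_comm
    _ = ∑ j, ∑ j', (aB j' * aB j) ⊗ₜ[K] (bB j ⊗ₜ[K] bB j') := by simp_rw [hdual1]

end DualBases

theorem canonical_tensor_delta_R13_R12_general
    {K A B D : Type*} [Field K] [Ring A] [Ring B] [Ring D]
    [Bialgebra K A] [Bialgebra K B] [Algebra K D]
    (ιA : A →ₐ[K] D) (ιB : B →ₐ[K] D)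
    (p : A →ₗ[K] Module.Dual K B)
    -- bialgebra pairing axiom: ⟨a'a'', b⟩ = ⟨a',b₂⟩⟨a'',b₁⟩
    (hpair2 : ∀ (a a' : A) (b : B),
      p (a * a') b = pair2' p (Coalgebra.comul (R := K) b) (a' ⊗ₜ[K] a))
    -- the coproduct of the Drinfeld double D
    (ΔD : D →ₗ[K] D ⊗[K] D)
    (hΔB : ∀ b : B, ΔD (ιB b) =
      TensorProduct.map ιB.toLinearMap ιB.toLinearMap (Coalgebra.comul (R := K) b))
    -- dual bases with respect to the (perfect) pairing
    {ι : Type*} [Fintype ι] (aB : ι → A) (bB : ι → B)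
    (hdual1 : ∀ a : A, ∑ k, p a (bB k) • aB k = a)
    (hdual2 : ∀ b : B, ∑ k, p (aB k) b • bB k = b) :
    TensorProduct.map (LinearMap.id (R := K) (M := D)) ΔD
        (∑ k, ιA (aB k) ⊗ₜ[K] ιB (bB k))
      = (∑ k, ιA (aB k) ⊗ₜ[K] ((1 : D) ⊗ₜ[K] ιB (bB k)))
        * (∑ k, ιA (aB k) ⊗ₜ[K] (ιB (bB k) ⊗ₜ[K] (1 : D))) := by
  set ιABB := TensorProduct.map ιA.toLinearMap (TensorProduct.map ιB.toLinearMap ιB.toLinearMap)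
  calc TensorProduct.map LinearMap.id ΔD (∑ k, ιA (aB k) ⊗ₜ[K] ιB (bB k))
      = ιABB (∑ k, aB k ⊗ₜ[K] Coalgebra.comul (R := K) (bB k)) := by
        simp [ιABB, hΔB]
    _ = ιABB (∑ j, ∑ j', (aB j' * aB j) ⊗ₜ[K] (bB j ⊗ₜ[K] bB j')) := by
        rw [sum_tmul_comul_eq_sum_sum_mul_tmul p aB bB hpair2 hdual1 hdual2]
    _ = _ := by
        simp only [ιABB, map_sum, map_tmul, AlgHom.toLinearMap_apply, map_mul, Finset.sum_mul_sum,
          Algebra.TensorProduct.tmul_mul_tmul, one_mul, mul_one]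
        exact Finset.sum_comm

theorem canonical_tensor_delta_R13_R12
    {K A B D : Type*} [Field K] [Ring A] [Ring B] [Ring D]
    [Bialgebra K A] [Bialgebra K B] [Algebra K D]
    (ιA : A →ₐ[K] D) (ιB : B →ₐ[K] D)
    (p : A →ₗ[K] Module.Dual K B)
    -- bialgebra pairing axiom: ⟨a, b'b''⟩ = ⟨a₁,b'⟩⟨a₂,b''⟩
    (hpair1 : ∀ (a : A) (b b' : B),
      p a (b * b') = pair2 p (Coalgebra.comul (R := K) a) (b ⊗ₜ[K] b'))
    -- bialgebra pairing axiom: ⟨a'a'', b⟩ = ⟨a',b₂⟩⟨a'',b₁⟩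
    (hpair2 : ∀ (a a' : A) (b : B),
      p (a * a') b = pair2' p (Coalgebra.comul (R := K) b) (a' ⊗ₜ[K] a))
    -- the coproduct of the Drinfeld double D
    (ΔD : D →ₗ[K] D ⊗[K] D)
    (hΔmul : ∀ x y' : D, ΔD (x * y') = ΔD x * ΔD y')
    (hΔA : ∀ a : A, ΔD (ιA a) =
      TensorProduct.map ιA.toLinearMap ιA.toLinearMap (Coalgebra.comul (R := K) a))
    (hΔB : ∀ b : B, ΔD (ιB b) =
      TensorProduct.map ιB.toLinearMap ιB.toLinearMap (Coalgebra.comul (R := K) b))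
    -- the Drinfeld double cross relation a₁b₁⟨a₂,b₂⟩ = ⟨a₁,b₁⟩b₂a₂
    (hcross : ∀ (a : A) (b : B),
      crossLHS p ιA.toLinearMap ιB.toLinearMap
          (TensorProduct.tensorTensorTensorComm K A A B B
            ((Coalgebra.comul (R := K) a) ⊗ₜ[K] (Coalgebra.comul (R := K) b)))
        = crossRHS p ιA.toLinearMap ιB.toLinearMap
          (TensorProduct.tensorTensorTensorComm K A A B B
            ((Coalgebra.comul (R := K) a) ⊗ₜ[K] (Coalgebra.comul (R := K) b))))
    -- D = A ⊗ B as a vector space: D is spanned by the products a·b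
    (hspan : Submodule.span K {d : D | ∃ (a : A) (b : B), d = ιA a * ιB b} = ⊤)
    -- dual bases with respect to the (perfect) pairing
    {ι : Type*} [Fintype ι] (aB : ι → A) (bB : ι → B)
    (hdual1 : ∀ a : A, ∑ k, p a (bB k) • aB k = a)
    (hdual2 : ∀ b : B, ∑ k, p (aB k) b • bB k = b) :
    TensorProduct.map (LinearMap.id (R := K) (M := D)) ΔD
        (∑ k, ιA (aB k) ⊗ₜ[K] ιB (bB k))
      = (∑ k, ιA (aB k) ⊗ₜ[K] ((1 : D) ⊗ₜ[K] ιB (bB k)))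
        * (∑ k, ιA (aB k) ⊗ₜ[K] (ιB (bB k) ⊗ₜ[K] (1 : D))) :=
  canonical_tensor_delta_R13_R12_general ιA ιB p hpair2 ΔD hΔB aB bB hdual1 hdual2
end

section
/- Let K be a field, V a K-vector space with a decomposition V = ⊕_ψ V_ψ indexed by loop weights ψ (I-tuples of formal power series), and suppose operators φ⁺_i(z) act on a tensor product V ⊗ W of two such graded spaces in block upper-triangular form with respect to a partial order on weights, with diagonal blocks acting as φ⁺_i(z) ⊗ φ⁺_i(z). Then the q-character of V ⊗ W (the formal sum Σ_ψ dim(V⊗W)_ψ [ψ] over generalized eigenspaces) equals the product χ_q(V)·χ_q(W) under the multiplication [ψ][ψ'] = [ψψ'] of formal symbols. -/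
/-!
Peel off an `r`-maximal block `p = (ψ, ψ')` from the set `P` of blocks `V_ψ ⊗ W_ψ'`: modulo the
span `N'` of the remaining blocks, every `T i d` acts on the span `N` of all of `P` as the scalar
`(ψψ')_{i,d}`. If these scalars are the coefficients of `χ`, Fitting's decomposition, applied to
finitely many `T i d` in turn (the joint eigenspace is a finite intersection, since `V ⊗ W` is
Artinian), gives `N = (N ∩ E_χ) + N'`, so `p` adds `dim V_ψ · dim W_ψ'` to `dim (N ∩ E_χ)`.
Otherwise some `T i d - χ_{i,d}` acts on `N / N'` as a nonzero scalar, and `N ∩ E_χ = N' ∩ E_χ`.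
Induction on `P` then computes `dim E_χ`.
-/

open TensorProduct

noncomputable def genEig {K M : Type*} [Field K] [AddCommGroup M] [Module K M]
    (f : Module.End K M) (c : K) : Submodule K M :=
  ⨆ N : ℕ, LinearMap.ker ((f - c • (1 : Module.End K M)) ^ N)

open Module

theorem WellFoundedLT.exists_finset_iInf_eq {α ι : Type*} [CompleteLattice α] [WellFoundedLT α]
    (f : ι → α) : ∃ s : Finset ι, ⨅ i ∈ s, f i = ⨅ i, f i := by
  classical
  obtain ⟨_, ⟨s, rfl⟩, hs⟩ :=
    wellFounded_lt.has_min (Set.range fun s : Finset ι => ⨅ i ∈ s, f i) (Set.range_nonempty _)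
  refine ⟨s, le_antisymm (le_iInf fun j => ?_) (le_iInf₂ fun i _ => iInf_le f i)⟩
  have hj := hs _ ⟨insert j s, rfl⟩
  simp only [Finset.iInf_insert] at hj
  exact eq_of_le_of_not_lt inf_le_right hj ▸ inf_le_left

theorem Finset.exists_forall_not_rel {ι : Type*} {r : ι → ι → Prop} [IsStrictOrder ι r]
    (s : Finset ι) (hs : s.Nonempty) : ∃ p ∈ s, ∀ q ∈ s, ¬ r p q := by
  obtain ⟨p₀, hp₀⟩ := hs
  obtain ⟨⟨p, hp⟩, -, hmax⟩ :=
    (s.finite_toSet.wellFoundedOn (r := Function.swap r)).has_min Set.univ ⟨⟨p₀, hp₀⟩, trivial⟩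
  exact ⟨p, hp, fun q hq => hmax ⟨q, hq⟩ trivial⟩

theorem Finset.biSup_product {α β γ : Type*} [CompleteLattice γ] (s : Finset α) (t : Finset β)
    (f : α × β → γ) : ⨆ x ∈ s ×ˢ t, f x = ⨆ a ∈ s, ⨆ b ∈ t, f (a, b) := by
  simp_rw [← Finset.mem_coe, Finset.coe_product, biSup_prod]

theorem Submodule.map₂_biSup_biSup {R M N P ι κ : Type*} [CommSemiring R] [AddCommMonoid M]
    [Module R M] [AddCommMonoid N] [Module R N] [AddCommMonoid P] [Module R P]
    (f : M →ₗ[R] N →ₗ[R] P) (s : Finset ι) (t : Finset κ) (p : ι → Submodule R M)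
    (q : κ → Submodule R N) :
    map₂ f (⨆ i ∈ s, p i) (⨆ j ∈ t, q j) = ⨆ x ∈ s ×ˢ t, map₂ f (p x.1) (q x.2) := by
  simp_rw [Finset.biSup_product, map₂_iSup_left, map₂_iSup_right]

theorem TensorProduct.biSup_range_map_subtype_eq_top {R V W ι κ : Type*} [CommRing R]
    [AddCommGroup V] [Module R V] [AddCommGroup W] [Module R W] {s : Finset ι} {t : Finset κ}
    {p : ι → Submodule R V} {q : κ → Submodule R W} (hp : ⨆ i ∈ s, p i = ⊤)
    (hq : ⨆ j ∈ t, q j = ⊤) :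
    ⨆ x ∈ s ×ˢ t, LinearMap.range (TensorProduct.map (p x.1).subtype (q x.2).subtype) = ⊤ := by
  simp only [range_mapIncl]
  rw [← Submodule.map₂_biSup_biSup, hp, hq, map₂_mk_top_top_eq_top]

section LinearAlgebra

variable {K M : Type*} [Field K] [AddCommGroup M] [Module K M]

theorem genEig_eq_maxGenEigenspace (f : End K M) (c : K) : genEig f c = f.maxGenEigenspace c := by
  simp_rw [← End.iSup_genEigenspace_eq, End.genEigenspace_nat]
  rfl

namespace Submodule

theorem finrank_biSup_le_sum [FiniteDimensional K M] {ι : Type*} [DecidableEq ι] (s : Finset ι)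
    (U : ι → Submodule K M) : finrank K ↥(⨆ i ∈ s, U i) ≤ ∑ i ∈ s, finrank K (U i) := by
  induction s using Finset.induction_on with
  | empty => simp
  | insert a s ha ih =>
    rw [Finset.iSup_insert, Finset.sum_insert ha]
    exact (finrank_add_le_finrank_add_finrank _ _).trans (Nat.add_le_add_left ih _)

theorem finrank_biSup_eq_sum_of_subset [FiniteDimensional K M] {ι : Type*} [DecidableEq ι]
    {s t : Finset ι} {U : ι → Submodule K M}
    (hs : finrank K ↥(⨆ i ∈ s, U i) = ∑ i ∈ s, finrank K (U i)) (hts : t ⊆ s) :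
    finrank K ↥(⨆ i ∈ t, U i) = ∑ i ∈ t, finrank K (U i) := by
  have hsup : (⨆ i ∈ t, U i) ⊔ ⨆ i ∈ s \ t, U i = ⨆ i ∈ s, U i := by
    rw [← Finset.iSup_union, Finset.union_sdiff_of_subset hts]
  have hsub := finrank_add_le_finrank_add_finrank (⨆ i ∈ t, U i) (⨆ i ∈ s \ t, U i)
  rw [hsup, hs, ← Finset.sum_sdiff hts] at hsub
  have ht := finrank_biSup_le_sum t U
  have hst := finrank_biSup_le_sum (s \ t) U
  omega

theorem le_inf_maxGenEigenspace_sup [FiniteDimensional K M] {φ : End K M} {μ : K}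
    {D N : Submodule K M} (hD : ∀ x ∈ D, φ x ∈ D) (h : ∀ x ∈ D, φ x - μ • x ∈ N) :
    D ≤ (D ⊓ φ.maxGenEigenspace μ) ⊔ N := by
  -- Fitting decomposition of `φ - μ` on `D`: its stable range lies in `(φ - μ) D ⊆ N`.
  set ψ := φ.restrict hD
  have hfit := LinearMap.isCompl_iSup_ker_pow_iInf_range_pow (ψ - μ • 1)
  simp_rw [← End.genEigenspace_nat, End.iSup_genEigenspace_eq] at hfit
  have hrange : (⨅ n, LinearMap.range ((ψ - μ • 1) ^ n)).map D.subtype ≤ N := by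
    refine (map_mono (iInf_le _ 1)).trans ?_
    rintro _ ⟨_, ⟨y, rfl⟩, rfl⟩
    simpa [ψ] using h y y.2
  calc D = (⊤ : Submodule K D).map D.subtype := by simp
    _ = (D ⊓ φ.maxGenEigenspace μ) ⊔ (⨅ n, LinearMap.range ((ψ - μ • 1) ^ n)).map D.subtype := by
      rw [← hfit.sup_eq_top, map_sup, inf_genEigenspace φ D hD]
    _ ≤ _ := sup_le_sup_left hrange _

theorem mem_of_mem_maxGenEigenspace_of_sub_smul_mem {φ : End K M} {c μ : K}
    {N : Submodule K M} (hN : ∀ x ∈ N, φ x ∈ N) (hcμ : c ≠ μ) {x : M}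
    (hx : x ∈ φ.maxGenEigenspace μ) (hc : φ x - c • x ∈ N) : x ∈ N := by
  -- Modulo `N`, `x` is a `c`-eigenvector of `φ`.
  have key : ∀ k : ℕ, ((φ - μ • 1) ^ k) x - (c - μ) ^ k • x ∈ N := by
    intro k
    induction k with
    | zero => simp
    | succ k ih =>
      have hsplit : ((φ - μ • 1) ^ (k + 1)) x - (c - μ) ^ (k + 1) • x
          = (φ - μ • 1) (((φ - μ • 1) ^ k) x - (c - μ) ^ k • x)
            + (c - μ) ^ k • (φ x - c • x) := by
        simp only [pow_succ', End.mul_apply, map_sub, map_smul, LinearMap.sub_apply,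
          LinearMap.smul_apply, End.one_apply]
        module
      rw [hsplit]
      refine add_mem ?_ (N.smul_mem _ hc)
      simpa using sub_mem (hN _ ih) (N.smul_mem μ ih)
  obtain ⟨k, hk⟩ := (End.mem_maxGenEigenspace _ _ _).mp hx
  have := key k
  rwa [hk, zero_sub, neg_mem_iff, smul_mem_iff _ (pow_ne_zero _ (sub_ne_zero.mpr hcμ))] at this

variable {A : Type*} {T : A → End K M}

theorem le_inf_iInf_maxGenEigenspace_sup [FiniteDimensional K M]
    (hcomm : ∀ a b, Commute (T a) (T b)) {f : A → K} {N N' : Submodule K M}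
    (hN : ∀ a, ∀ x ∈ N, T a x ∈ N) (h : ∀ a, ∀ x ∈ N, T a x - f a • x ∈ N') :
    N ≤ (N ⊓ ⨅ a, (T a).maxGenEigenspace (f a)) ⊔ N' := by
  classical
  suffices hfin : ∀ s : Finset A, N ≤ (N ⊓ ⨅ a ∈ s, (T a).maxGenEigenspace (f a)) ⊔ N' by
    obtain ⟨s, hs⟩ := WellFoundedLT.exists_finset_iInf_eq fun a => (T a).maxGenEigenspace (f a)
    exact hs ▸ hfin s
  intro s
  induction s using Finset.induction_on with
  | empty => simp
  | insert b s _ ih =>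
    set D := N ⊓ ⨅ a ∈ s, (T a).maxGenEigenspace (f a)
    have hD : ∀ x ∈ D, T b x ∈ D := by
      intro x hx
      obtain ⟨hxN, hxE⟩ := mem_inf.mp hx
      refine mem_inf.mpr ⟨hN b x hxN, ?_⟩
      simp only [mem_iInf] at hxE ⊢
      exact fun a ha => End.mapsTo_maxGenEigenspace_of_comm (hcomm a b) _ (hxE a ha)
    calc N ≤ D ⊔ N' := ih
      _ ≤ (D ⊓ (T b).maxGenEigenspace (f b)) ⊔ N' ⊔ N' :=
        sup_le_sup_right (le_inf_maxGenEigenspace_sup hD fun x hx => h b x hx.1) _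
      _ = _ := by
        rw [sup_assoc, sup_idem, Finset.iInf_insert, inf_left_comm, inf_comm D]

theorem inf_iInf_maxGenEigenspace_le {c f : A → K} (hcf : c ≠ f) {N N' : Submodule K M}
    (hN' : ∀ a, ∀ x ∈ N', T a x ∈ N') (h : ∀ a, ∀ x ∈ N, T a x - c a • x ∈ N') :
    N ⊓ ⨅ a, (T a).maxGenEigenspace (f a) ≤ N' := by
  obtain ⟨a, ha⟩ := Function.ne_iff.mp hcf
  intro x hx
  obtain ⟨hxN, hxE⟩ := mem_inf.mp hx
  exact mem_of_mem_maxGenEigenspace_of_sub_smul_mem (hN' a) ha (mem_iInf _ |>.mp hxE a)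
    (h a x hxN)

end Submodule

theorem DirectSum.IsInternal.finiteDimensional {ι : Type*} [DecidableEq ι] [Fintype ι]
    {N : ι → Submodule K M} [∀ i, FiniteDimensional K (N i)] (h : DirectSum.IsInternal N) :
    FiniteDimensional K M :=
  Module.Finite.equiv (LinearEquiv.ofBijective (DirectSum.coeLinearMap N) h)

theorem DirectSum.IsInternal.finrank_eq_sum {ι : Type*} [DecidableEq ι] [Fintype ι]
    {N : ι → Submodule K M} [∀ i, FiniteDimensional K (N i)] (h : DirectSum.IsInternal N) :
    finrank K M = ∑ i, finrank K (N i) := by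
  rw [← (LinearEquiv.ofBijective (DirectSum.coeLinearMap N) h).finrank_eq, Module.finrank_directSum]

theorem TensorProduct.finrank_range_map_subtype {V W : Type*} [AddCommGroup V] [Module K V]
    [AddCommGroup W] [Module K W] (p : Submodule K V) (q : Submodule K W) [FiniteDimensional K p]
    [FiniteDimensional K q] :
    finrank K (LinearMap.range (TensorProduct.map p.subtype q.subtype))
      = finrank K p * finrank K q := by
  rw [LinearMap.finrank_range_of_inj (Module.Flat.tensorProduct_mapIncl_injective_of_right p q),
    Module.finrank_tensorProduct]

theorem DirectSum.IsInternal.finrank_tensorProduct_eq_sum {V W ι κ : Type*} [AddCommGroup V]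
    [Module K V] [AddCommGroup W] [Module K W] [DecidableEq ι] [DecidableEq κ] {s : Finset ι}
    {t : Finset κ} {p : ι → Submodule K V} {q : κ → Submodule K W} [∀ i, FiniteDimensional K (p i)]
    [∀ j, FiniteDimensional K (q j)] (hp : DirectSum.IsInternal fun i : s => p i)
    (hq : DirectSum.IsInternal fun j : t => q j) :
    finrank K (V ⊗[K] W)
      = ∑ x ∈ s ×ˢ t,
          finrank K (LinearMap.range (TensorProduct.map (p x.1).subtype (q x.2).subtype)) := by
  rw [finrank_tensorProduct, hp.finrank_eq_sum, hq.finrank_eq_sum,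
    Finset.sum_coe_sort s (fun i => finrank K (p i)),
    Finset.sum_coe_sort t (fun j => finrank K (q j)),
    Finset.sum_mul_sum, Finset.sum_product]
  simp only [TensorProduct.finrank_range_map_subtype]

def IsBlockTriangular {A ι : Type*} (T : A → End K M) (r : ι → ι → Prop)
    (U : ι → Submodule K M) (c : ι → A → K) (P : Finset ι) : Prop :=
  ∀ p ∈ P, ∀ a, ∀ x ∈ U p, T a x - c p a • x ∈ ⨆ q ∈ P, ⨆ (_ : r q p), U q

namespace IsBlockTriangular

variable {A ι : Type*} {T : A → End K M} {r : ι → ι → Prop} {U : ι → Submodule K M}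
  {c : ι → A → K} {P : Finset ι}

theorem mapsTo_biSup (htri : IsBlockTriangular T r U c P) (a : A) :
    ∀ x ∈ ⨆ p ∈ P, U p, T a x ∈ ⨆ p ∈ P, U p := by
  suffices h : ⨆ p ∈ P, U p ≤ (⨆ p ∈ P, U p).comap (T a) from fun x hx => h hx
  refine iSup₂_le fun p hp y hy => ?_
  have hle : ⨆ q ∈ P, ⨆ (_ : r q p), U q ≤ ⨆ q ∈ P, U q := iSup₂_mono fun q _ => iSup_const_le
  simpa using add_mem (hle (htri p hp a y hy)) (Submodule.smul_mem _ (c p a) (le_biSup U hp hy))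

variable [DecidableEq ι]

theorem erase (htri : IsBlockTriangular T r U c P) {p : ι} (hmax : ∀ q ∈ P, ¬ r p q) :
    IsBlockTriangular T r U c (P.erase p) := by
  intro q hq a x hx
  have hle : ⨆ q' ∈ P, ⨆ (_ : r q' q), U q' ≤ ⨆ q' ∈ P.erase p, ⨆ (_ : r q' q), U q' := by
    refine iSup₂_le fun q' hq' => iSup_le fun hr => ?_
    have hq'p : q' ≠ p := by
      rintro rfl
      exact hmax q (Finset.mem_of_mem_erase hq) hr
    exact (le_iSup (fun _ : r q' q => U q') hr).trans
      (le_biSup (fun q' => ⨆ (_ : r q' q), U q') (Finset.mem_erase.mpr ⟨hq'p, hq'⟩))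
  exact hle (htri q (Finset.mem_of_mem_erase hq) a x hx)

theorem sub_smul_mem_biSup_erase [Std.Irrefl r] (htri : IsBlockTriangular T r U c P) {p : ι}
    (hp : p ∈ P) (hmax : ∀ q ∈ P, ¬ r p q) (a : A) :
    ∀ x ∈ ⨆ q ∈ P, U q, T a x - c p a • x ∈ ⨆ q ∈ P.erase p, U q := by
  have hle : ⨆ q ∈ P, ⨆ (_ : r q p), U q ≤ ⨆ q ∈ P.erase p, U q :=
    iSup₂_le fun q hq => iSup_le fun hr =>
      le_biSup U (Finset.mem_erase.mpr ⟨fun hqp => irrefl p (hqp ▸ hr), hq⟩)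
  intro x hx
  rw [← Finset.insert_erase hp, Finset.iSup_insert] at hx
  obtain ⟨y, hy, z, hz, rfl⟩ := Submodule.mem_sup.mp hx
  have hzerr : T a z - c p a • z ∈ ⨆ q ∈ P.erase p, U q :=
    sub_mem ((htri.erase hmax).mapsTo_biSup a z hz) (Submodule.smul_mem _ _ hz)
  rw [map_add, smul_add, add_sub_add_comm]
  exact add_mem (hle (htri p hp a y hy)) hzerr

theorem finrank_inf_iInf_maxGenEigenspace [FiniteDimensional K M] [IsStrictOrder ι r]
    [DecidableEq (A → K)] (hcomm : ∀ a b, Commute (T a) (T b))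
    (htri : IsBlockTriangular T r U c P)
    (hdim : finrank K ↥(⨆ p ∈ P, U p) = ∑ p ∈ P, finrank K (U p)) (f : A → K) :
    finrank K ↥((⨆ p ∈ P, U p) ⊓ ⨅ a, (T a).maxGenEigenspace (f a))
      = ∑ p ∈ P with c p = f, finrank K (U p) := by
  induction P using Finset.strongInduction with
  | H P ih =>
  rcases P.eq_empty_or_nonempty with rfl | hne
  · simp
  obtain ⟨p, hp, hmax⟩ := P.exists_forall_not_rel (r := r) hne
  have hdim' := Submodule.finrank_biSup_eq_sum_of_subset hdim (P.erase_subset p)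
  have ih' := ih _ (Finset.erase_ssubset hp) (htri.erase hmax) hdim'
  have hstep := htri.sub_smul_mem_biSup_erase hp hmax
  set E := ⨅ a, (T a).maxGenEigenspace (f a)
  set N := ⨆ q ∈ P, U q
  set N' := ⨆ q ∈ P.erase p, U q
  have hN'N : N' ≤ N := biSup_mono fun q hq => Finset.mem_of_mem_erase hq
  have hsum : ∑ q ∈ P with c q = f, finrank K (U q)
      = (if c p = f then finrank K (U p) else 0)
        + ∑ q ∈ P.erase p with c q = f, finrank K (U q) := by
    simp only [Finset.sum_filter]
    exact (Finset.add_sum_erase _ _ hp).symm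
  by_cases hcf : c p = f
  · have hcover : N ≤ (N ⊓ E) ⊔ N' :=
      Submodule.le_inf_iInf_maxGenEigenspace_sup hcomm htri.mapsTo_biSup (hcf ▸ hstep)
    have hsupinf := Submodule.finrank_sup_add_finrank_inf_eq (N ⊓ E) N'
    rw [le_antisymm (sup_le inf_le_left hN'N) hcover, inf_right_comm,
      inf_eq_right.mpr hN'N] at hsupinf
    have hN := Finset.add_sum_erase P (fun q => finrank K (U q)) hp
    rw [hsum, if_pos hcf]
    omega
  · have hle := Submodule.inf_iInf_maxGenEigenspace_le hcf (htri.erase hmax).mapsTo_biSup hstep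
    rw [hsum, if_neg hcf, zero_add, ← ih',
      le_antisymm (le_inf hle inf_le_right) (inf_le_inf_right E hN'N)]

end IsBlockTriangular

end LinearAlgebra

-- The paper's `ψ_{i,d}`, the eigenvalue of `φ⁺_{i,d}` on the weight space `V_ψ`.
noncomputable def loopWeightCoeff {K I : Type*} [Semiring K] (ψ : I → (PowerSeries K)ˣ)
    (a : I × ℕ) : K :=
  PowerSeries.coeff a.2 (ψ a.1 : PowerSeries K)

theorem loopWeightCoeff_injective {K I : Type*} [Semiring K] :
    Function.Injective (loopWeightCoeff (K := K) (I := I)) := fun _ _ h =>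
  funext fun i => Units.ext <| PowerSeries.ext fun d => congrFun h (i, d)

theorem q_characters_multiplicative
    {K : Type*} [Field K] {I : Type*}
    [DecidableEq (I → (PowerSeries K)ˣ)]
    {V W : Type*} [AddCommGroup V] [Module K V] [AddCommGroup W] [Module K W]
    (SV SW : Finset (I → (PowerSeries K)ˣ))
    (Vsub : (I → (PowerSeries K)ˣ) → Submodule K V)
    (Wsub : (I → (PowerSeries K)ˣ) → Submodule K W)
    (hVint : DirectSum.IsInternal (fun ψ : SV => Vsub ↑ψ))
    (hWint : DirectSum.IsInternal (fun ψ : SW => Wsub ↑ψ))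
    [∀ ψ, FiniteDimensional K (Vsub ψ)] [∀ ψ, FiniteDimensional K (Wsub ψ)]
    -- the commuting family of operators φ⁺_{i,d} on V ⊗ W
    (T : I → ℕ → Module.End K (V ⊗[K] W))
    (hcomm : ∀ i d i' d', Commute (T i d) (T i' d'))
    -- a strict partial order on loop weights (λγⁿ > λ)
    (r : (I → (PowerSeries K)ˣ) → (I → (PowerSeries K)ˣ) → Prop)
    (htrans : Transitive r) (hirr : Irreflexive r)
    -- block upper-triangularity with diagonal blocks acting via (ψψ')_{i,d}
    (htri : ∀ ψ ∈ SV, ∀ ψ' ∈ SW, ∀ (i : I) (d : ℕ),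
      ∀ x ∈ LinearMap.range
          (TensorProduct.map (Vsub ψ).subtype (Wsub ψ').subtype),
        T i d x - (PowerSeries.coeff d ((ψ i * ψ' i : (PowerSeries K)ˣ) : PowerSeries K)) • x
          ∈ ⨆ (μ ∈ SV) (μ' ∈ SW) (_ : r (μ * μ') (ψ * ψ')),
              LinearMap.range
                (TensorProduct.map (Vsub μ).subtype (Wsub μ').subtype)) :
    ∀ χ : I → (PowerSeries K)ˣ,
      Module.finrank K
          ↥(⨅ (i : I) (d : ℕ),
            genEig (T i d) (PowerSeries.coeff d ((χ i : PowerSeries K))))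
        = ∑ q ∈ (SV ×ˢ SW).filter (fun q => q.1 * q.2 = χ),
            Module.finrank K ↥(Vsub q.1) * Module.finrank K ↥(Wsub q.2) := by
  intro χ
  classical
  have : IsStrictOrder _ r := { irrefl := hirr, trans := fun _ _ _ => @htrans _ _ _ }
  have := hVint.finiteDimensional
  have := hWint.finiteDimensional
  set U := fun q : (I → (PowerSeries K)ˣ) × (I → (PowerSeries K)ˣ) =>
    LinearMap.range (TensorProduct.map (Vsub q.1).subtype (Wsub q.2).subtype)
  have htop : ⨆ q ∈ SV ×ˢ SW, U q = ⊤ := by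
    refine TensorProduct.biSup_range_map_subtype_eq_top ?_ ?_
    · rw [iSup_subtype']; exact hVint.submodule_iSup_eq_top
    · rw [iSup_subtype']; exact hWint.submodule_iSup_eq_top
  have hdim : finrank K ↥(⨆ q ∈ SV ×ˢ SW, U q) = ∑ q ∈ SV ×ˢ SW, finrank K (U q) := by
    rw [htop, finrank_top]
    exact hVint.finrank_tensorProduct_eq_sum hWint
  have hblock : IsBlockTriangular (fun a : I × ℕ => T a.1 a.2) ((fun q => q.1 * q.2) ⁻¹'o r) U
      (fun q => loopWeightCoeff (q.1 * q.2)) (SV ×ˢ SW) := by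
    rintro ⟨ψ, ψ'⟩ hq ⟨i, d⟩ x hx
    obtain ⟨hψ, hψ'⟩ := Finset.mem_product.mp hq
    rw [Finset.biSup_product]
    exact htri ψ hψ ψ' hψ' i d x hx
  have hmain := hblock.finrank_inf_iInf_maxGenEigenspace (fun a b => hcomm a.1 a.2 b.1 b.2) hdim
    (loopWeightCoeff χ)
  rw [htop, top_inf_eq] at hmain
  have hE : ⨅ (i : I) (d : ℕ), genEig (T i d) (PowerSeries.coeff d (χ i : PowerSeries K))
      = ⨅ a : I × ℕ, (T a.1 a.2).maxGenEigenspace (loopWeightCoeff χ a) := by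
    simp_rw [genEig_eq_maxGenEigenspace, iInf_prod]
    rfl
  rw [hE, hmain]
  exact Finset.sum_congr (Finset.filter_congr fun q _ => loopWeightCoeff_injective.eq_iff)
    fun q _ => TensorProduct.finrank_range_map_subtype _ _
end

section
/- Let A be an algebra graded by ℤ^I × ℤ. Define A ⊗̂^H A as the space of (possibly infinite) sums Σ_k x_k ⊗ y_k of homogeneous tensors of fixed total degree such that, for every N ∈ ℕ, all but finitely many summands satisfy |hdeg x_k| ≤ −N and |hdeg y_k| ≥ N (where |n| = Σ_i n_i for n ∈ ℤ^I). Then A ⊗̂^H A is closed under the multiplication induced by (x ⊗ y)(x' ⊗ y') = xx' ⊗ yy': the product of two elements of A ⊗̂^H A is a well-defined element of A ⊗̂^H A. -/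
/-!
Attach to a homogeneous tensor `x ⊗ y` the weight `min (-|hdeg x|) |hdeg y|`, so that a family
of tensors is admissible exactly when its weights tend to `+∞` along the cofinite filter. Since
`|hdeg|` is additive, the weight of `xx' ⊗ yy'` is at least the sum of the weights of `x ⊗ y`
and `x' ⊗ y'`, and a sum `f k + g l` of two functions tending to `+∞` along the cofinite filters
tends to `+∞` along the cofinite filter of the product.
-/

open Filter

theorem Filter.Tendsto.add_prod_cofinite_atTop {α β γ : Type*} [AddCommGroup γ] [LinearOrder γ]
    [IsOrderedAddMonoid γ] {f : α → γ} {g : β → γ}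
    (hf : Tendsto f cofinite atTop) (hg : Tendsto g cofinite atTop) :
    Tendsto (fun p : α × β => f p.1 + g p.2) cofinite atTop := by
  obtain ⟨Cf, hCf⟩ := hf.isBoundedUnder_ge_atTop.bddBelow_range_of_cofinite
  obtain ⟨Cg, hCg⟩ := hg.isBoundedUnder_ge_atTop.bddBelow_range_of_cofinite
  -- On `comap fst cofinite` the first summand tends to `+∞` and the second is bounded below;
  -- symmetrically on `comap snd cofinite`, and their supremum is the cofinite filter.
  rw [← coprod_cofinite, Filter.coprod, tendsto_sup]
  exact ⟨tendsto_atTop_add_right_of_le _ Cg (hf.comp tendsto_comap) fun p => hCg ⟨p.2, rfl⟩,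
    tendsto_atTop_add_left_of_le _ Cf (fun p => hCf ⟨p.1, rfl⟩) (hg.comp tendsto_comap)⟩

section HorizontalDegree

variable {I : Type*} [Fintype I]

def hdegNorm (d : (I → ℤ) × ℤ) : ℤ := ∑ i, d.1 i

lemma hdegNorm_add (d d' : (I → ℤ) × ℤ) : hdegNorm (d + d') = hdegNorm d + hdegNorm d' :=
  Finset.sum_add_distrib

def tensorWeight (d e : (I → ℤ) × ℤ) : ℤ := min (-hdegNorm d) (hdegNorm e)

lemma le_tensorWeight_iff {N : ℤ} {d e : (I → ℤ) × ℤ} :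
    N ≤ tensorWeight d e ↔ hdegNorm d ≤ -N ∧ N ≤ hdegNorm e := by
  rw [tensorWeight, le_min_iff, le_neg]

lemma tensorWeight_add_le (d e d' e' : (I → ℤ) × ℤ) :
    tensorWeight d e + tensorWeight d' e' ≤ tensorWeight (d + d') (e + e') := by
  simpa only [tensorWeight, hdegNorm_add, neg_add] using min_add_min_le_min_add_add

lemma tendsto_tensorWeight_iff {ι : Type*} (dx dy : ι → (I → ℤ) × ℤ) :
    Tendsto (fun k => tensorWeight (dx k) (dy k)) cofinite atTop ↔
      ∀ N : ℤ, {k | ¬ (hdegNorm (dx k) ≤ -N ∧ N ≤ hdegNorm (dy k))}.Finite := by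
  simp only [tendsto_atTop, eventually_cofinite, le_tensorWeight_iff]

end HorizontalDegree

theorem completed_horizontal_tensor_closed_under_multiplication
    {K : Type*} [Field K] {I : Type*} [Fintype I]
    {A : Type*} [Ring A] [Algebra K A]
    (𝒜 : (I → ℤ) × ℤ → Submodule K A)
    (hmul : ∀ (d d' : (I → ℤ) × ℤ) (u u' : A),
      u ∈ 𝒜 d → u' ∈ 𝒜 d' → u * u' ∈ 𝒜 (d + d'))
    -- two elements Σ_k x_k ⊗ y_k and Σ_l x'_l ⊗ y'_l of A ⊗̂^H A
    (x y x' y' : ℕ → A) (dx dy dx' dy' : ℕ → (I → ℤ) × ℤ)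
    (hx : ∀ k, x k ∈ 𝒜 (dx k)) (hy : ∀ k, y k ∈ 𝒜 (dy k))
    (hx' : ∀ l, x' l ∈ 𝒜 (dx' l)) (hy' : ∀ l, y' l ∈ 𝒜 (dy' l))
    (hadm : ∀ N : ℤ,
      {k : ℕ | ¬ ((∑ i, (dx k).1 i) ≤ -N ∧ N ≤ ∑ i, (dy k).1 i)}.Finite)
    (hadm' : ∀ N : ℤ,
      {l : ℕ | ¬ ((∑ i, (dx' l).1 i) ≤ -N ∧ N ≤ ∑ i, (dy' l).1 i)}.Finite) :
    -- the product family (k,l) ↦ (x_k x'_l) ⊗ (y_k y'_l) consists of homogeneous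
    -- tensors of the expected degrees …
    (∀ kl : ℕ × ℕ,
      x kl.1 * x' kl.2 ∈ 𝒜 (dx kl.1 + dx' kl.2)
        ∧ y kl.1 * y' kl.2 ∈ 𝒜 (dy kl.1 + dy' kl.2))
    -- … and again satisfies the ⊗̂^H admissibility condition
    ∧ (∀ N : ℤ,
      {kl : ℕ × ℕ |
        ¬ ((∑ i, (dx kl.1 + dx' kl.2).1 i) ≤ -N
            ∧ N ≤ ∑ i, (dy kl.1 + dy' kl.2).1 i)}.Finite) := by
  refine ⟨fun kl => ⟨hmul _ _ _ _ (hx _) (hx' _), hmul _ _ _ _ (hy _) (hy' _)⟩, ?_⟩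
  have hw : Tendsto (fun kl : ℕ × ℕ => tensorWeight (dx kl.1) (dy kl.1) +
      tensorWeight (dx' kl.2) (dy' kl.2)) cofinite atTop :=
    ((tendsto_tensorWeight_iff dx dy).2 hadm).add_prod_cofinite_atTop
      ((tendsto_tensorWeight_iff dx' dy').2 hadm')
  have hprod := (tendsto_tensorWeight_iff (fun kl : ℕ × ℕ => dx kl.1 + dx' kl.2)
    (fun kl => dy kl.1 + dy' kl.2)).1 (tendsto_atTop_mono (fun kl => tensorWeight_add_le _ _ _ _) hw)
  exact hprod
end
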